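/- arXiv:2106.00546 — 2 statements merged into one kernel-verified Lean document; each statement's English description precedes it below -/
import Mathlib

section
/- Let F = {1,…,m}, C a monotone predicate on subsets of F with C(F), and D(T) := ¬C(F \ T). Let ℂ_min be the subset-minimal elements of ℂ = {S : C(S)} and 𝔻_min the subset-minimal elements of 𝔻 = {T : D(T)}. Then every S ∈ ℂ_min is a minimal hitting set of 𝔻: S hits every T ∈ 𝔻, and no proper subset of S hits every T ∈ 𝔻. -/
/-- ℂ_min ⊆ MHS(𝔻): every subset-minimal set satisfying a monotone predicate `C`
(with `C F`) is a minimal hitting set of the dual family `𝔻 = {T : ¬C (F \ T)}`. -/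
theorem stmt3 {m : ℕ} (C : Finset (Fin m) → Prop)
    (hmono : ∀ S S' : Finset (Fin m), S ⊆ S' → C S → C S')
    (hF : C Finset.univ)
    (S : Finset (Fin m)) (hS : C S) (hmin : ∀ U : Finset (Fin m), U ⊂ S → ¬C U) :
    (∀ T : Finset (Fin m), ¬C (Finset.univ \ T) → (S ∩ T).Nonempty) ∧
    (∀ S' : Finset (Fin m), S' ⊂ S →
      ¬(∀ T : Finset (Fin m), ¬C (Finset.univ \ T) → (S' ∩ T).Nonempty)) := by
  constructor
  · intro T hT
    by_contra h
    rw [Finset.not_nonempty_iff_eq_empty] at h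
    exact hT (hmono S _ (fun x hx => Finset.mem_sdiff.2 ⟨Finset.mem_univ x,
      fun hxT => Finset.eq_empty_iff_forall_notMem.1 h x
        (Finset.mem_inter.2 ⟨hx, hxT⟩)⟩) hS)
  · intro S' hS' hall
    have hT : ¬C (Finset.univ \ (Finset.univ \ S')) := by
      simpa using hmin S' hS'
    obtain ⟨x, hx⟩ := hall _ hT
    simp [Finset.mem_inter, Finset.mem_sdiff] at hx
end

section
/- Let f : {0,1}^n → {0,1} and define F : {0,1}^n × {0,1}^2 → {0,1} by F(x, p) = 1 if p₁ = p₂ = 1 and F(x, p) = f(x) otherwise. Let v = ((0,…,0),(1,1)) (so F(v) = 1), δ = 3/4, and S = {the index of p₁}. Then Pr(F(x,p) = 1 | (x,p) agrees with v on S) > δ if and only if |{x : f(x) = 1}| > |{x : f(x) = 0}|. -/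
open scoped Classical

/-- MajSAT reduction (PP-hardness of deciding Cδ-relevancy): with
`F(x,p) = 1` if `p₁ = p₂ = 1` and `F(x,p) = f x` otherwise, instance
`v = ((0,…,0),(1,1))`, `δ = 3/4` and `S = {p₁}`, the conditional probability
`Pr(F(x,p) = 1 | p₁ = 1)` exceeds `3/4` iff the models of `f` are a strict
majority. -/
theorem stmt16 (n : ℕ) (f : (Fin n → Bool) → Bool) :
    (((Finset.univ.filter
          (fun z : (Fin n → Bool) × Bool × Bool =>
            (if z.2.1 = true ∧ z.2.2 = true then true else f z.1) = true ∧
              z.2.1 = true)).card : ℝ) /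
        ((Finset.univ.filter
          (fun z : (Fin n → Bool) × Bool × Bool => z.2.1 = true)).card) >
      3 / 4) ↔
    (Finset.univ.filter (fun x : Fin n → Bool => f x = true)).card >
      (Finset.univ.filter (fun x : Fin n → Bool => f x = false)).card := by
  set M := (Finset.univ.filter (fun x : Fin n → Bool => f x = true)).card with hM
  set M' := (Finset.univ.filter (fun x : Fin n → Bool => f x = false)).card with hM'
  have hMM' : M + M' = 2 ^ n := by
    have := Finset.card_filter_add_card_filter_not
      (s := (Finset.univ : Finset (Fin n → Bool))) (p := fun x => f x = true)
    simpa [Bool.not_eq_true, Finset.card_univ, hM, hM'] using this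
  have hnum : (Finset.univ.filter
          (fun z : (Fin n → Bool) × Bool × Bool =>
            (if z.2.1 = true ∧ z.2.2 = true then true else f z.1) = true ∧
              z.2.1 = true)).card = 2 ^ n + M := by
    rw [Finset.card_filter, Fintype.sum_prod_type]
    simp only [Fintype.sum_prod_type, Fintype.sum_bool]
    norm_num
    rw [Finset.sum_add_distrib, Finset.sum_const, ← Finset.card_filter]
    simp [Finset.card_univ, hM]
  have hden : (Finset.univ.filter
          (fun z : (Fin n → Bool) × Bool × Bool => z.2.1 = true)).card = 2 ^ (n + 1) := by
    rw [Finset.card_filter, Fintype.sum_prod_type]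
    simp only [Fintype.sum_prod_type, Fintype.sum_bool]
    norm_num
    simp [Finset.card_univ, pow_succ, mul_two, two_mul]
  rw [hnum, hden]
  rw [gt_iff_lt, div_lt_div_iff₀ (by norm_num) (by push_cast; positivity)]
  push_cast
  rw [show ((2:ℝ)^n + M) * 4 = 4 * 2^n + 4 * M by ring,
      show (3:ℝ) * 2^(n+1) = 6 * 2^n by ring]
  have h2 : ((M : ℝ) + M') = 2 ^ n := by exact_mod_cast hMM'
  constructor
  · intro h
    have : (M' : ℝ) < M := by nlinarith
    exact_mod_cast this
  · intro h
    have : (M' : ℝ) < M := by exact_mod_cast h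
    nlinarith
end
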